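/- arXiv:2411.12955 — 3 statements merged into one kernel-verified Lean document; each statement's English description precedes it below -/
import Mathlib

section
/- Let S ∈ ℝ^{m×n} be nonzero with singular value decomposition S = U [[Σ₁, 0], [0, 0]] Vᵀ, where U ∈ ℝ^{m×m} and V ∈ ℝ^{n×n} are orthogonal and Σ₁ ∈ ℝ^{ρ×ρ} is invertible (ρ = rank S ≥ 1). Then matrices A ∈ ℝ^{m×m} and B ∈ ℝ^{n×n} satisfy AS = SB if and only if there exist matrices Ā₁₂, Ā₂₂, B̄₁₁, B̄₂₁, B̄₂₂ of appropriate dimensions such that A = U [[Σ₁ B̄₁₁ Σ₁⁻¹, Ā₁₂], [0, Ā₂₂]] Uᵀ and B = V [[B̄₁₁, 0], [B̄₂₁, B̄₂₂]] Vᵀ. -/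
open Matrix


private theorem mulCancelAux {n k : Type*} [Fintype n] [DecidableEq n]
    (M N : Matrix n n ℝ) (h : M * N = 1) (X : Matrix n k ℝ) :
    M * (N * X) = X := by
  rw [← Matrix.mul_assoc, h, Matrix.one_mul]

/-- Lemma: given the SVD `S = U [[Sig1,0],[0,0]] Vᵀ` of a nonzero matrix `S` of rank `ρ ≥ 1`,
`A S = S B` iff `A` and `B` have the stated block structure. -/
theorem commute_with_svd_iff {ρ p q : ℕ} (hρ : 1 ≤ ρ)
    (U : Matrix (Fin ρ ⊕ Fin p) (Fin ρ ⊕ Fin p) ℝ)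
    (V : Matrix (Fin ρ ⊕ Fin q) (Fin ρ ⊕ Fin q) ℝ)
    (hU : U * Uᵀ = 1) (hU' : Uᵀ * U = 1) (hV : V * Vᵀ = 1) (hV' : Vᵀ * V = 1)
    (Sig1 : Matrix (Fin ρ) (Fin ρ) ℝ) (hSig : IsUnit Sig1)
    (S : Matrix (Fin ρ ⊕ Fin p) (Fin ρ ⊕ Fin q) ℝ)
    (hS : S = U * (fromBlocks Sig1 0 0 0 : Matrix (Fin ρ ⊕ Fin p) (Fin ρ ⊕ Fin q) ℝ) * Vᵀ) (hS0 : S ≠ 0)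
    (A : Matrix (Fin ρ ⊕ Fin p) (Fin ρ ⊕ Fin p) ℝ)
    (B : Matrix (Fin ρ ⊕ Fin q) (Fin ρ ⊕ Fin q) ℝ) :
    A * S = S * B ↔
      ∃ (A12 : Matrix (Fin ρ) (Fin p) ℝ) (A22 : Matrix (Fin p) (Fin p) ℝ)
        (B11 : Matrix (Fin ρ) (Fin ρ) ℝ) (B21 : Matrix (Fin q) (Fin ρ) ℝ)
        (B22 : Matrix (Fin q) (Fin q) ℝ),
        A = U * fromBlocks (Sig1 * B11 * Sig1⁻¹) A12 0 A22 * Uᵀ ∧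
        B = V * fromBlocks B11 0 B21 B22 * Vᵀ := by
  have hdet : IsUnit Sig1.det := (Matrix.isUnit_iff_isUnit_det Sig1).mp hSig
  have hinv : Sig1 * Sig1⁻¹ = 1 := Matrix.mul_nonsing_inv Sig1 hdet
  have hinv' : Sig1⁻¹ * Sig1 = 1 := Matrix.nonsing_inv_mul Sig1 hdet
  set D : Matrix (Fin ρ ⊕ Fin p) (Fin ρ ⊕ Fin q) ℝ := fromBlocks Sig1 0 0 0 with hD
  constructor
  · intro h
    set Ab := Uᵀ * A * U with hAb
    set Bb := Vᵀ * B * V with hBb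
    have key : Ab * D = D * Bb := by
      have h2 := congrArg (fun M => Uᵀ * M * V) h
      simp only [hS] at h2
      simpa only [hAb, hBb, Matrix.mul_assoc, mulCancelAux _ _ hU', mulCancelAux _ _ hV',
        hV', Matrix.mul_one] using h2
    rw [← Matrix.fromBlocks_toBlocks Ab, ← Matrix.fromBlocks_toBlocks Bb, hD,
      Matrix.fromBlocks_multiply, Matrix.fromBlocks_multiply] at key
    simp only [Matrix.mul_zero, Matrix.zero_mul, add_zero, zero_add] at key
    have e11 : Ab.toBlocks₁₁ * Sig1 = Sig1 * Bb.toBlocks₁₁ := congrArg Matrix.toBlocks₁₁ key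
    have e21 : Ab.toBlocks₂₁ * Sig1 = 0 := congrArg Matrix.toBlocks₂₁ key
    have e12 : (0 : Matrix (Fin ρ) (Fin q) ℝ) = Sig1 * Bb.toBlocks₁₂ :=
      congrArg Matrix.toBlocks₁₂ key
    have hA21 : Ab.toBlocks₂₁ = 0 := by
      have := congrArg (fun M => M * Sig1⁻¹) e21
      simpa [Matrix.mul_assoc, hinv] using this
    have hB12 : Bb.toBlocks₁₂ = 0 := by
      have := congrArg (fun M => Sig1⁻¹ * M) e12.symm
      simpa [← Matrix.mul_assoc, hinv'] using this
    have hA11 : Sig1 * Bb.toBlocks₁₁ * Sig1⁻¹ = Ab.toBlocks₁₁ := by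
      have := congrArg (fun M => M * Sig1⁻¹) e11
      simp only [Matrix.mul_assoc, hinv, Matrix.mul_one] at this
      simpa [Matrix.mul_assoc] using this.symm
    refine ⟨Ab.toBlocks₁₂, Ab.toBlocks₂₂, Bb.toBlocks₁₁, Bb.toBlocks₂₁, Bb.toBlocks₂₂, ?_, ?_⟩
    · rw [hA11, ← hA21, Matrix.fromBlocks_toBlocks Ab, hAb]
      simp only [Matrix.mul_assoc, mulCancelAux _ _ hU, hU, Matrix.mul_one]
    · rw [← hB12, Matrix.fromBlocks_toBlocks Bb, hBb]
      simp only [Matrix.mul_assoc, mulCancelAux _ _ hV, hV, Matrix.mul_one]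
  · rintro ⟨A12, A22, B11, B21, B22, rfl, rfl⟩
    rw [hS]
    set F := fromBlocks (Sig1 * B11 * Sig1⁻¹) A12 0 A22 with hF
    set G := fromBlocks B11 0 B21 B22 with hG
    have mid : F * D = D * G := by
      rw [hF, hG, hD, Matrix.fromBlocks_multiply, Matrix.fromBlocks_multiply]
      simp [Matrix.mul_assoc, hinv']
    have lhs : U * F * Uᵀ * (U * D * Vᵀ) = U * (F * D) * Vᵀ := by
      simp only [Matrix.mul_assoc, mulCancelAux _ _ hU']
    have rhs : U * D * Vᵀ * (V * G * Vᵀ) = U * (D * G) * Vᵀ := by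
      simp only [Matrix.mul_assoc, mulCancelAux _ _ hV']
    rw [lhs, rhs, mid]
end

section
/- Consider N systems with quadratic supply rates: suppose for each i, symmetric Qᵢ ⪯ 0 with εᵢ := -λ_max(Qᵢ) ≥ 0, and signals yᵢ(t) ∈ ℝ^n, output scheduling matrices Φ_{y,i}(t), and y(t) = ∑ᵢ Φ_{y,i}(t) yᵢ(t). If σ_Ψ(t) is the largest singular value of Ψ(t) = [Φ_{y,1}(t) ⋯ Φ_{y,N}(t)] and σ̄_Ψ := sup_t σ_Ψ(t) ∈ (0, ∞), then pointwise in t: ∑ᵢ yᵢ(t)ᵀ Qᵢ yᵢ(t) ≤ -(ε_min/σ̄_Ψ²) ‖y(t)‖², where ε_min = min_i εᵢ. -/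
/-! Each `yᵢᵀ Qᵢ yᵢ` is at most `λ_max(Qᵢ) ‖yᵢ‖² ≤ -ε_min ‖yᵢ‖²`, since `λ_max(Qᵢ) • 1 - Qᵢ` is
positive semidefinite. Stacking the `yᵢ` into one vector `z` gives `y = Ψ z` and
`‖z‖² = ∑ ‖yᵢ‖²`, so `‖y‖² ≤ σ_max(Ψ)² ‖z‖² ≤ σ̄_Ψ² ∑ ‖yᵢ‖²`; as `ε_min ≥ 0`
(each `Qᵢ ⪯ 0`), the two bounds combine. -/

open Matrix

/-- For a real matrix, `Aᵀ * A` is Hermitian. -/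
theorem transpose_mul_self_isHermitian {m n : Type*} [Fintype m] [Fintype n]
    (A : Matrix m n ℝ) : (Aᵀ * A).IsHermitian := by
  rw [← Matrix.conjTranspose_eq_transpose_of_trivial]
  exact Matrix.isHermitian_conjTranspose_mul_self A

/-- Largest eigenvalue of a Hermitian real matrix. -/
noncomputable def lamMax {n : Type*} [Fintype n] [DecidableEq n] {A : Matrix n n ℝ}
    (hA : A.IsHermitian) : ℝ := ⨆ i, hA.eigenvalues i

/-- Square of the largest singular value: `λ_max (Aᵀ A)`. -/
noncomputable def sigmaMaxSq {m n : Type*} [Fintype m] [Fintype n] [DecidableEq n]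
    (A : Matrix m n ℝ) : ℝ := lamMax (transpose_mul_self_isHermitian A)

/-- Square of the smallest singular value: `λ_min (Aᵀ A)`. -/
noncomputable def nuMinSq {m n : Type*} [Fintype m] [Fintype n] [DecidableEq n]
    (A : Matrix m n ℝ) : ℝ := ⨅ i, (transpose_mul_self_isHermitian A).eigenvalues i

namespace Matrix

open Unitary
open scoped ComplexOrder

theorem IsHermitian.posSemidef_smul_one_sub {n 𝕜 : Type*} [Fintype n] [DecidableEq n]
    [RCLike 𝕜] {A : Matrix n n 𝕜} (hA : A.IsHermitian) {c : ℝ} (hc : ∀ i, hA.eigenvalues i ≤ c) :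
    ((c : 𝕜) • 1 - A).PosSemidef := by
  have hdiag : (c : 𝕜) • 1 - A = conjStarAlgAut 𝕜 _ hA.eigenvectorUnitary
      (diagonal (RCLike.ofReal ∘ fun i => c - hA.eigenvalues i)) := by
    conv_lhs => rw [hA.spectral_theorem]
    rw [← map_one (conjStarAlgAut 𝕜 _ hA.eigenvectorUnitary), ← map_smul, ← map_sub]
    congr 1
    ext i j
    by_cases h : i = j <;> simp [h, diagonal, Algebra.algebraMap_eq_smul_one, sub_smul]
  rw [hdiag, conjStarAlgAut_apply, isUnit_coe.posSemidef_star_right_conjugate_iff,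
    posSemidef_diagonal_iff]
  intro i
  simpa using hc i

theorem dotProduct_self_nonneg {n : Type*} [Fintype n] (x : n → ℝ) : 0 ≤ x ⬝ᵥ x := by
  simpa using dotProduct_star_self_nonneg x

theorem mulVec_uncurry_eq_sum {ι m n R : Type*} [Fintype ι] [Fintype n]
    [NonUnitalNonAssocSemiring R] (Ψ : Matrix m (ι × n) R) (Φ : ι → Matrix m n R)
    (hΨ : ∀ i k j, Ψ i (k, j) = Φ k i j) (v : ι → n → R) :
    Ψ *ᵥ Function.uncurry v = ∑ k, Φ k *ᵥ v k := by
  ext i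
  simp [mulVec, dotProduct, Fintype.sum_prod_type, hΨ]

theorem uncurry_dotProduct_uncurry {ι n R : Type*} [Fintype ι] [Fintype n] [Mul R]
    [AddCommMonoid R] (v w : ι → n → R) :
    Function.uncurry v ⬝ᵥ Function.uncurry w = ∑ k, v k ⬝ᵥ w k := by
  simp [dotProduct, Fintype.sum_prod_type]

section Real

variable {m n : Type*} [Fintype m] [Fintype n] [DecidableEq n]

theorem eigenvalues_le_lamMax {A : Matrix n n ℝ} (hA : A.IsHermitian) (i : n) :
    hA.eigenvalues i ≤ lamMax hA :=
  le_ciSup (Set.finite_range _).bddAbove i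

theorem lamMax_nonpos_of_posSemidef_neg {A : Matrix n n ℝ} (hA : A.IsHermitian)
    (hneg : (-A).PosSemidef) : lamMax hA ≤ 0 := by
  refine Real.iSup_nonpos fun i => ?_
  have := hneg.re_dotProduct_nonneg (hA.eigenvectorBasis i)
  rw [hA.eigenvalues_eq i]
  simpa [neg_mulVec] using this

theorem dotProduct_mulVec_le_lamMax_mul {A : Matrix n n ℝ} (hA : A.IsHermitian) (x : n → ℝ) :
    x ⬝ᵥ A *ᵥ x ≤ lamMax hA * (x ⬝ᵥ x) := by
  have := (hA.posSemidef_smul_one_sub (eigenvalues_le_lamMax hA)).dotProduct_mulVec_nonneg x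
  simpa [sub_mulVec, smul_mulVec, dotProduct_smul] using this

theorem mulVec_dotProduct_mulVec_le_sigmaMaxSq_mul (A : Matrix m n ℝ) (x : n → ℝ) :
    A *ᵥ x ⬝ᵥ A *ᵥ x ≤ sigmaMaxSq A * (x ⬝ᵥ x) := by
  calc A *ᵥ x ⬝ᵥ A *ᵥ x = x ⬝ᵥ (Aᵀ * A) *ᵥ x := by
        rw [← mulVec_mulVec, dotProduct_mulVec x, vecMul_transpose]
    _ ≤ sigmaMaxSq A * (x ⬝ᵥ x) :=
        dotProduct_mulVec_le_lamMax_mul (transpose_mul_self_isHermitian A) x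

end Real

end Matrix

/-- Pointwise version of Lemma 2: for negative semidefinite `Qᵢ` with `εᵢ = -λ_max(Qᵢ)`,
and `y = ∑ Φ_{y,i} yᵢ` with `σ_max([Φ_{y,1} ⋯ Φ_{y,N}]) ≤ σ̄_Ψ`,
`∑ yᵢᵀ Qᵢ yᵢ ≤ -(ε_min/σ̄_Ψ²) ‖y‖²`. -/
theorem scheduled_Q_bound {N n : ℕ} (hN : 0 < N)
    (Q : Fin N → Matrix (Fin n) (Fin n) ℝ) (hQh : ∀ i, (Q i).IsHermitian)
    (hQ : ∀ i, (-(Q i)).PosSemidef)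
    (Φ : Fin N → Matrix (Fin n) (Fin n) ℝ) (yi : Fin N → Fin n → ℝ)
    (y : Fin n → ℝ) (hy : y = ∑ i, (Φ i).mulVec (yi i))
    (Ψ : Matrix (Fin n) (Fin N × Fin n) ℝ) (hΨ : ∀ i k j, Ψ i (k, j) = Φ k i j)
    (σb : ℝ) (hσb : 0 < σb) (hbound : sigmaMaxSq Ψ ≤ σb ^ 2) :
    ∑ i, yi i ⬝ᵥ (Q i).mulVec (yi i) ≤
      -((Finset.univ.inf' ⟨⟨0, hN⟩, Finset.mem_univ _⟩ fun i => -lamMax (hQh i)) / σb ^ 2) *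
        (y ⬝ᵥ y) := by
  set ε := Finset.univ.inf' ⟨⟨0, hN⟩, Finset.mem_univ _⟩ fun i => -lamMax (hQh i)
  have hε : 0 ≤ ε := Finset.le_inf' _ _ fun i _ =>
    neg_nonneg.2 (lamMax_nonpos_of_posSemidef_neg (hQh i) (hQ i))
  have hsum : ∑ i, yi i ⬝ᵥ (Q i) *ᵥ yi i ≤ -ε * ∑ i, yi i ⬝ᵥ yi i := by
    rw [Finset.mul_sum]
    gcongr with i
    calc yi i ⬝ᵥ (Q i) *ᵥ yi i ≤ lamMax (hQh i) * (yi i ⬝ᵥ yi i) :=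
          dotProduct_mulVec_le_lamMax_mul (hQh i) _
      _ ≤ -ε * (yi i ⬝ᵥ yi i) := by
          gcongr
          · exact dotProduct_self_nonneg _
          · exact le_neg_of_le_neg (Finset.inf'_le _ (Finset.mem_univ i))
  have hyS : y ⬝ᵥ y ≤ σb ^ 2 * ∑ i, yi i ⬝ᵥ yi i := by
    rw [hy, ← mulVec_uncurry_eq_sum Ψ Φ hΨ, ← uncurry_dotProduct_uncurry]
    calc _ ≤ sigmaMaxSq Ψ * _ := mulVec_dotProduct_mulVec_le_sigmaMaxSq_mul Ψ _
      _ ≤ _ := by gcongr; exact dotProduct_self_nonneg _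
  calc ∑ i, yi i ⬝ᵥ (Q i) *ᵥ yi i ≤ -ε * ∑ i, yi i ⬝ᵥ yi i := hsum
    _ ≤ -(ε / σb ^ 2) * (y ⬝ᵥ y) := by
      rw [neg_mul, neg_mul, neg_le_neg_iff, div_mul_eq_mul_div, div_le_iff₀ (by positivity)]
      linarith [mul_le_mul_of_nonneg_left hyS hε]
end

section
/- Let Rᵢ ∈ ℝ^{n×n} be symmetric for i = 1, ..., N, and uᵢ = Φ_{u,i} u for some matrices Φ_{u,i} ∈ ℝ^{n×n} and u ∈ ℝ^n. Partition the indices into R_{>0}, R_{<0}, R_0 according to the sign of λ_max(Rᵢ), and let δ_max = max_{i∈R_{>0}} λ_max(Rᵢ), δ_min = min_{i∈R_{<0}} |λ_max(Rᵢ)|, σ̄_u = ∑_{i∈R_{>0}} σ_max(Φ_{u,i})², ν̄_u = ∑_{i∈R_{<0}} ν_min(Φ_{u,i})². Then ∑_{i=1}^N uᵢᵀ Rᵢ uᵢ ≤ (δ_max σ̄_u − δ_min ν̄_u) ‖u‖². -/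
open Matrix

/-! The Rayleigh inequality `x ⬝ᵥ A x ≤ λ_max(A) ‖x‖²`, obtained by writing the quadratic form in
an orthonormal eigenbasis, applied to `x = Φᵢ u` bounds the `i`-th term by `λ_max(Rᵢ) ‖Φᵢ u‖²`.
Since `‖Φᵢ u‖² = u ⬝ᵥ (Φᵢᵀ Φᵢ) u` lies between `ν_min(Φᵢ)² ‖u‖²` and `σ_max(Φᵢ)² ‖u‖²`, a term with
`λ_max(Rᵢ) > 0` is at most `δ_max σ_max(Φᵢ)² ‖u‖²`, one with `λ_max(Rᵢ) < 0` is at most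
`-δ_min ν_min(Φᵢ)² ‖u‖²`, and one with `λ_max(Rᵢ) = 0` is nonpositive. -/

namespace Matrix.IsHermitian

variable {n : Type*} [Fintype n] [DecidableEq n] {A : Matrix n n ℝ} (hA : A.IsHermitian)

theorem eigenvectorUnitary_mul_transpose :
    (hA.eigenvectorUnitary : Matrix n n ℝ) * (hA.eigenvectorUnitary : Matrix n n ℝ)ᵀ = 1 := by
  rw [← conjTranspose_eq_transpose_of_trivial, ← star_eq_conjTranspose,
    Unitary.mul_star_self_of_mem hA.eigenvectorUnitary.2]

theorem dotProduct_self_transpose_eigenvectorUnitary_mulVec (x : n → ℝ) :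
    ((hA.eigenvectorUnitary : Matrix n n ℝ)ᵀ *ᵥ x) ⬝ᵥ
      ((hA.eigenvectorUnitary : Matrix n n ℝ)ᵀ *ᵥ x) = x ⬝ᵥ x := by
  rw [dotProduct_mulVec, vecMul_transpose, mulVec_mulVec, eigenvectorUnitary_mul_transpose,
    one_mulVec]

theorem dotProduct_mulVec_eq_sum_eigenvalues (x : n → ℝ) :
    x ⬝ᵥ A *ᵥ x = ∑ i, hA.eigenvalues i *
      ((hA.eigenvectorUnitary : Matrix n n ℝ)ᵀ *ᵥ x) i ^ 2 := by
  conv_lhs => rw [hA.spectral_theorem, Unitary.conjStarAlgAut_apply]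
  rw [star_eq_conjTranspose, conjTranspose_eq_transpose_of_trivial, mul_assoc, ← mulVec_mulVec,
    dotProduct_mulVec, ← mulVec_transpose, ← mulVec_mulVec]
  simp only [dotProduct, mulVec_diagonal, Function.comp_apply, RCLike.ofReal_real_eq_id, id]
  exact Finset.sum_congr rfl fun i _ => by ring

theorem dotProduct_mulVec_le_lamMax (x : n → ℝ) : x ⬝ᵥ A *ᵥ x ≤ lamMax hA * (x ⬝ᵥ x) := by
  rw [hA.dotProduct_mulVec_eq_sum_eigenvalues,
    ← hA.dotProduct_self_transpose_eigenvectorUnitary_mulVec, dotProduct, Finset.mul_sum]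
  simp only [← sq]
  exact Finset.sum_le_sum fun i _ =>
    mul_le_mul_of_nonneg_right (le_ciSup (Set.finite_range _).bddAbove i) (sq_nonneg _)

theorem iInf_eigenvalues_mul_le_dotProduct_mulVec (x : n → ℝ) :
    (⨅ i, hA.eigenvalues i) * (x ⬝ᵥ x) ≤ x ⬝ᵥ A *ᵥ x := by
  rw [hA.dotProduct_mulVec_eq_sum_eigenvalues,
    ← hA.dotProduct_self_transpose_eigenvectorUnitary_mulVec, dotProduct, Finset.mul_sum]
  simp only [← sq]
  exact Finset.sum_le_sum fun i _ =>
    mul_le_mul_of_nonneg_right (ciInf_le (Set.finite_range _).bddBelow i) (sq_nonneg _)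

end Matrix.IsHermitian

theorem dotProduct_mulVec_self_eq {α m n : Type*} [CommSemiring α] [Fintype m] [Fintype n]
    (A : Matrix m n α) (x : n → α) : A *ᵥ x ⬝ᵥ A *ᵥ x = x ⬝ᵥ (Aᵀ * A) *ᵥ x := by
  rw [← mulVec_mulVec, dotProduct_mulVec, ← mulVec_transpose, dotProduct_comm]

section SingularValues

variable {m n : Type*} [Fintype m] [Fintype n] [DecidableEq n] (A : Matrix m n ℝ) (x : n → ℝ)

theorem dotProduct_mulVec_self_le_sigmaMaxSq :
    A *ᵥ x ⬝ᵥ A *ᵥ x ≤ sigmaMaxSq A * (x ⬝ᵥ x) := by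
  rw [dotProduct_mulVec_self_eq]
  exact (transpose_mul_self_isHermitian A).dotProduct_mulVec_le_lamMax x

theorem nuMinSq_mul_le_dotProduct_mulVec_self :
    nuMinSq A * (x ⬝ᵥ x) ≤ A *ᵥ x ⬝ᵥ A *ᵥ x := by
  rw [dotProduct_mulVec_self_eq]
  exact (transpose_mul_self_isHermitian A).iInf_eigenvalues_mul_le_dotProduct_mulVec x

theorem nuMinSq_nonneg : 0 ≤ nuMinSq A := by
  have hA : (Aᵀ * A).PosSemidef := by
    rw [← conjTranspose_eq_transpose_of_trivial]
    exact posSemidef_conjTranspose_mul_self A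
  exact Real.iInf_nonneg hA.eigenvalues_nonneg

end SingularValues

theorem dotProduct_mulVec_nonpos_of_lamMax_nonpos {n : Type*} [Fintype n] [DecidableEq n]
    {R : Matrix n n ℝ} (hR : R.IsHermitian) (h : lamMax hR ≤ 0) (x : n → ℝ) :
    x ⬝ᵥ R *ᵥ x ≤ 0 :=
  (hR.dotProduct_mulVec_le_lamMax x).trans
    (mul_nonpos_of_nonpos_of_nonneg h (dotProduct_self_star_nonneg x))

section QuadraticForm

variable {m n : Type*} [Fintype m] [Fintype n] [DecidableEq m] [DecidableEq n]
  {R : Matrix m m ℝ} (hR : R.IsHermitian) (Φ : Matrix m n ℝ) (u : n → ℝ) {d : ℝ}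

theorem dotProduct_mulVec_le_of_lamMax_pos (hpos : 0 < lamMax hR) (hd : lamMax hR ≤ d) :
    Φ *ᵥ u ⬝ᵥ R *ᵥ (Φ *ᵥ u) ≤ d * sigmaMaxSq Φ * (u ⬝ᵥ u) := by
  have hΦ := dotProduct_mulVec_self_le_sigmaMaxSq Φ u
  have hσ : 0 ≤ sigmaMaxSq Φ * (u ⬝ᵥ u) := (dotProduct_self_star_nonneg _).trans hΦ
  calc Φ *ᵥ u ⬝ᵥ R *ᵥ (Φ *ᵥ u) ≤ lamMax hR * (Φ *ᵥ u ⬝ᵥ Φ *ᵥ u) :=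
        hR.dotProduct_mulVec_le_lamMax _
    _ ≤ lamMax hR * (sigmaMaxSq Φ * (u ⬝ᵥ u)) := mul_le_mul_of_nonneg_left hΦ hpos.le
    _ ≤ d * (sigmaMaxSq Φ * (u ⬝ᵥ u)) := mul_le_mul_of_nonneg_right hd hσ
    _ = d * sigmaMaxSq Φ * (u ⬝ᵥ u) := by ring

theorem dotProduct_mulVec_le_of_lamMax_neg (hneg : lamMax hR < 0) (hd : d ≤ |lamMax hR|) :
    Φ *ᵥ u ⬝ᵥ R *ᵥ (Φ *ᵥ u) ≤ -(d * nuMinSq Φ * (u ⬝ᵥ u)) := by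
  have hν : 0 ≤ nuMinSq Φ * (u ⬝ᵥ u) :=
    mul_nonneg (nuMinSq_nonneg Φ) (dotProduct_self_star_nonneg u)
  rw [abs_of_neg hneg] at hd
  calc Φ *ᵥ u ⬝ᵥ R *ᵥ (Φ *ᵥ u) ≤ lamMax hR * (Φ *ᵥ u ⬝ᵥ Φ *ᵥ u) :=
        hR.dotProduct_mulVec_le_lamMax _
    _ ≤ lamMax hR * (nuMinSq Φ * (u ⬝ᵥ u)) :=
        mul_le_mul_of_nonpos_left (nuMinSq_mul_le_dotProduct_mulVec_self Φ u) hneg.le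
    _ ≤ -d * (nuMinSq Φ * (u ⬝ᵥ u)) := mul_le_mul_of_nonneg_right (by linarith) hν
    _ = -(d * nuMinSq Φ * (u ⬝ᵥ u)) := by ring

end QuadraticForm

open Classical in
theorem sum_dotProduct_mulVec_le {ι m n : Type*} [Fintype ι] [Fintype m] [Fintype n]
    [DecidableEq m] [DecidableEq n] (R : ι → Matrix m m ℝ) (hR : ∀ i, (R i).IsHermitian)
    (Φ : ι → Matrix m n ℝ) (u : n → ℝ) {dmax dmin : ℝ}
    (hmax : ∀ i, 0 < lamMax (hR i) → lamMax (hR i) ≤ dmax)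
    (hmin : ∀ i, lamMax (hR i) < 0 → dmin ≤ |lamMax (hR i)|) :
    ∑ i, Φ i *ᵥ u ⬝ᵥ R i *ᵥ (Φ i *ᵥ u) ≤
      (dmax * ∑ i ∈ Finset.univ.filter fun i => 0 < lamMax (hR i), sigmaMaxSq (Φ i)
        - dmin * ∑ i ∈ Finset.univ.filter fun i => lamMax (hR i) < 0, nuMinSq (Φ i)) *
        (u ⬝ᵥ u) := by
  have key : ∀ i, Φ i *ᵥ u ⬝ᵥ R i *ᵥ (Φ i *ᵥ u) ≤
      (if 0 < lamMax (hR i) then dmax * sigmaMaxSq (Φ i) * (u ⬝ᵥ u) else 0) +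
        (if lamMax (hR i) < 0 then -(dmin * nuMinSq (Φ i) * (u ⬝ᵥ u)) else 0) := by
    intro i
    rcases lt_trichotomy (lamMax (hR i)) 0 with hneg | hzero | hpos
    · simpa [hneg, hneg.not_gt] using
        dotProduct_mulVec_le_of_lamMax_neg (hR i) (Φ i) u hneg (hmin i hneg)
    · simpa [hzero] using dotProduct_mulVec_nonpos_of_lamMax_nonpos (hR i) hzero.le (Φ i *ᵥ u)
    · simpa [hpos, hpos.not_gt] using
        dotProduct_mulVec_le_of_lamMax_pos (hR i) (Φ i) u hpos (hmax i hpos)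
  calc ∑ i, Φ i *ᵥ u ⬝ᵥ R i *ᵥ (Φ i *ᵥ u) ≤ _ := Finset.sum_le_sum fun i _ => key i
    _ = _ := by
      rw [Finset.sum_add_distrib, ← Finset.sum_filter, ← Finset.sum_filter,
        Finset.sum_neg_distrib, ← Finset.sum_mul, ← Finset.sum_mul, ← Finset.mul_sum,
        ← Finset.mul_sum]
      ring

open Classical in
/-- Pointwise version of Lemma 3: with `uᵢ = Φ_{u,i} u`,
`∑ uᵢᵀ Rᵢ uᵢ ≤ (δ_max σ̄_u − δ_min ν̄_u) ‖u‖²`. -/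
theorem scheduled_R_bound {N n : ℕ}
    (R : Fin N → Matrix (Fin n) (Fin n) ℝ) (hR : ∀ i, (R i).IsHermitian)
    (Φ : Fin N → Matrix (Fin n) (Fin n) ℝ) (u : Fin n → ℝ) :
    ∑ i, (Φ i).mulVec u ⬝ᵥ (R i).mulVec ((Φ i).mulVec u) ≤
      ((if h : (Finset.univ.filter fun i => 0 < lamMax (hR i)).Nonempty then
          (Finset.univ.filter fun i => 0 < lamMax (hR i)).sup' h fun i => lamMax (hR i)
        else 0) *
        ∑ i ∈ Finset.univ.filter fun i => 0 < lamMax (hR i), sigmaMaxSq (Φ i)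
      - (if h : (Finset.univ.filter fun i => lamMax (hR i) < 0).Nonempty then
          (Finset.univ.filter fun i => lamMax (hR i) < 0).inf' h fun i => |lamMax (hR i)|
        else 0) *
        ∑ i ∈ Finset.univ.filter fun i => lamMax (hR i) < 0, nuMinSq (Φ i)) *
      (u ⬝ᵥ u) := by
  refine sum_dotProduct_mulVec_le R hR Φ u (fun i hi => ?_) (fun i hi => ?_)
  · have hmem : i ∈ Finset.univ.filter fun i => 0 < lamMax (hR i) := by simpa using hi
    rw [dif_pos ⟨i, hmem⟩]
    exact Finset.le_sup' (fun i => lamMax (hR i)) hmem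
  · have hmem : i ∈ Finset.univ.filter fun i => lamMax (hR i) < 0 := by simpa using hi
    rw [dif_pos ⟨i, hmem⟩]
    exact Finset.inf'_le (fun i => |lamMax (hR i)|) hmem
end
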